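/- In a proper tiling using the tiles of the Takenaga–Walsh reduction, every tile whose top label is the special symbol 'top' must be placed in the top row of the board, and consequently the 4n+2 assignment-component tiles occupy exactly the top row. -/
import Mathlib


/-- Edge labels: integers plus the special boundary markers `top`, `left`, `right`. -/
inductive Lab where
  | num : ℤ → Lab
  | top : Lab
  | left : Lab
  | right : Lab
deriving DecidableEq

/-- A Tetravex tile: labels on its top, right, bottom and left edges. -/
structure Tile where
  top : Lab
  right : Lab
  bottom : Lab
  left : Lab
deriving DecidableEq

/-- A placement on an `h × w` board (first index = row, second = column) is proper
if horizontally adjacent tiles agree on the shared vertical edge and vertically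
adjacent tiles agree on the shared horizontal edge. -/
def IsProper (h w : ℕ) (p : Fin h → Fin w → Tile) : Prop :=
  (∀ (i : Fin h) (j j' : Fin w), (j' : ℕ) = (j : ℕ) + 1 → (p i j).right = (p i j').left) ∧
  (∀ (i i' : Fin h) (j : Fin w), (i' : ℕ) = (i : ℕ) + 1 → (p i j).bottom = (p i' j).top)

/-- The multiset of tiles used by a placement. -/
def TilesOf (h w : ℕ) (p : Fin h → Fin w → Tile) : Multiset Tile :=
  (Finset.univ : Finset (Fin h × Fin w)).val.map fun q => p q.1 q.2

/-- A multiset of tiles admits a proper tiling of an `h × w` board. -/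
def Tileable (h w : ℕ) (T : Multiset Tile) : Prop :=
  ∃ p : Fin h → Fin w → Tile, TilesOf h w p = T ∧ IsProper h w p

/-- **The `top` marker forces the top row**: in a proper tiling on a board of
width `4n+2` with tiles none of which carries the special symbol `top` as its
bottom label, every tile whose top label is `top` must be placed in the top
row; consequently, if exactly `4n+2` of the tiles carry top label `top` (the
assignment-component tiles of the Takenaga–Walsh reduction), these tiles occupy
exactly the top row. -/
theorem top_marker_forces_top_row (n h : ℕ) (p : Fin h → Fin (4 * n + 2) → Tile)
    (hp : IsProper h (4 * n + 2) p)
    (hno : ∀ (i : Fin h) (j : Fin (4 * n + 2)), (p i j).bottom ≠ Lab.top)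
    (hcount : ((Finset.univ : Finset (Fin h × Fin (4 * n + 2))).filter
        (fun q : Fin h × Fin (4 * n + 2) => (p q.1 q.2).top = Lab.top)).card = 4 * n + 2) :
    ∀ (i : Fin h) (j : Fin (4 * n + 2)), (p i j).top = Lab.top ↔ (i : ℕ) = 0 := by
  have hforward : ∀ (i : Fin h) (j : Fin (4 * n + 2)), (p i j).top = Lab.top → (i : ℕ) = 0 := by
    intro i j ht
    by_contra h0
    have hi : (i : ℕ) - 1 < h := lt_of_le_of_lt (Nat.pred_le _) i.isLt
    have := hp.2 ⟨(i : ℕ) - 1, hi⟩ i j (by simp; omega)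
    rw [ht] at this
    exact hno _ j this
  intro i j
  constructor
  · exact hforward i j
  · intro hi0
    have hpos : 0 < h := i.pos
    set S := (Finset.univ : Finset (Fin h × Fin (4 * n + 2))).filter
        (fun q : Fin h × Fin (4 * n + 2) => (p q.1 q.2).top = Lab.top) with hS
    set T := ({(⟨0, hpos⟩ : Fin h)} : Finset (Fin h)) ×ˢ
        (Finset.univ : Finset (Fin (4 * n + 2))) with hT
    have hsub : S ⊆ T := by
      intro q hq
      simp only [hS, Finset.mem_filter] at hq
      simp only [hT, Finset.mem_product, Finset.mem_singleton, Finset.mem_univ, and_true]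
      exact Fin.ext (hforward _ _ hq.2)
    have hcardT : T.card = 4 * n + 2 := by
      simp [hT]
    have heq : S = T := Finset.eq_of_subset_of_card_le hsub (by rw [hcardT, hcount])
    have hmem : (i, j) ∈ T := by
      simp only [hT, Finset.mem_product, Finset.mem_singleton, Finset.mem_univ, and_true]
      exact Fin.ext hi0
    rw [← heq] at hmem
    simpa [hS] using (Finset.mem_filter.mp hmem).2
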